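/- Let B be any nondegenerate symmetric ℝ/ℤ-valued pairing on the group A = (ℤ/2) × (ℤ/2), and let Q : A → ℝ/ℤ be a quadratic refinement of B with Q(0) = 0. Then the Gauss sum G(Q) is nonzero and the Arf invariant of Q lies in {0, 1/4, 1/2, 3/4} ⊂ ℝ/ℤ. (This is the corollary constraining the anomaly of the self-dual field on the manifold X₁₁, whose twisted cohomology H⁶(X₁₁;L) has torsion subgroup ℤ/2 ⊕ ℤ/2.) -/

import Mathlib

open scoped BigOperators

/-- The representative in `[0,1)` of an element of `ℝ/ℤ`. -/
noncomputable def rep (x : AddCircle (1 : ℝ)) : ℝ :=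
  (AddCircle.equivIco (1 : ℝ) 0 x).1

/-- The Gauss sum `G(Q) = Σ_{a ∈ A} exp(2πi·Q̃(a))` of an `ℝ/ℤ`-valued function `Q`
on a finite type, where `Q̃(a) ∈ [0,1)` is the representative of `Q(a)`. -/
noncomputable def gaussSumQ {A : Type*} [Fintype A] (Q : A → AddCircle (1 : ℝ)) : ℂ :=
  ∑ a, Complex.exp (2 * (Real.pi : ℂ) * Complex.I * (rep (Q a) : ℂ))

/-- The Arf invariant `(1/2π)·arg G(Q) ∈ ℝ/ℤ` of `Q` (meaningful when `G(Q) ≠ 0`). -/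
noncomputable def arf {A : Type*} [Fintype A] (Q : A → AddCircle (1 : ℝ)) :
    AddCircle (1 : ℝ) :=
  ((Complex.arg (gaussSumQ Q) / (2 * Real.pi) : ℝ) : AddCircle (1 : ℝ))

/-!
Nondegeneracy makes `b ↦ e(B(c, b))` a nontrivial character for `c ≠ 0`, so expanding
`|G(Q)|² = Σ_{a,b} e(Q a - Q b)` and substituting `a = c + b` leaves only the term `c = 0`:
`|G(Q)|² = |A| = 4`. On `(ℤ/2)²` every value of `Q` is `4`-torsion, so `G(Q)` is a sum of fourth
roots of unity, i.e. a Gaussian integer of norm `4`; hence `G(Q) ∈ {±2, ±2i}`, whose arguments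
are multiples of `π/2`.
-/

open Complex ComplexConjugate

lemma coe_rep (x : AddCircle (1 : ℝ)) : (rep x : AddCircle (1 : ℝ)) = x :=
  (AddCircle.equivIco (1 : ℝ) 0).symm_apply_apply x

lemma exp_two_pi_I_rep (x : AddCircle (1 : ℝ)) :
    exp (2 * Real.pi * I * rep x) = AddCircle.toCircle x := by
  conv_rhs => rw [← coe_rep x]
  rw [AddCircle.toCircle_apply_mk, Circle.coe_exp]
  push_cast
  ring_nf

lemma gaussSumQ_eq_sum_toCircle {A : Type*} [Fintype A] (Q : A → AddCircle (1 : ℝ)) :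
    gaussSumQ Q = ∑ a, (AddCircle.toCircle (Q a) : ℂ) := by
  simp only [gaussSumQ, exp_two_pi_I_rep]

noncomputable def AddMonoidHom.toCircleChar {A : Type*} [AddCommGroup A]
    (φ : A →+ AddCircle (1 : ℝ)) : AddChar A ℂ where
  toFun b := AddCircle.toCircle (φ b)
  map_zero_eq_one' := by simp
  map_add_eq_mul' a b := by simp [AddCircle.toCircle_add]

lemma AddMonoidHom.toCircleChar_eq_zero_iff {A : Type*} [AddCommGroup A]
    (φ : A →+ AddCircle (1 : ℝ)) : φ.toCircleChar = 0 ↔ φ = 0 := by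
  rw [AddChar.eq_zero_iff, DFunLike.ext_iff]
  refine forall_congr' fun b => ?_
  rw [AddMonoidHom.zero_apply, ← (AddCircle.injective_toCircle one_ne_zero).eq_iff,
    AddCircle.toCircle_zero, ← Circle.coe_eq_one]
  rfl

lemma mem_range_toComplex_of_pow_four_eq_one {z : ℂ} (hz : z ^ 4 = 1) :
    z ∈ GaussianInt.toComplex.range := by
  have : (z - 1) * (z + 1) * (z - I) * (z + I) = 0 := by
    linear_combination hz - (z ^ 2 - 1) * I_sq
  simp only [mul_eq_zero, sub_eq_zero, add_eq_zero_iff_eq_neg] at this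
  rcases this with ((rfl | rfl) | rfl) | rfl
  · exact ⟨1, map_one _⟩
  · exact ⟨-1, by simp⟩
  · exact ⟨⟨0, 1⟩, by simp [GaussianInt.toComplex_def']⟩
  · exact ⟨⟨0, -1⟩, by simp [GaussianInt.toComplex_def']⟩

lemma Int.eq_of_mul_self_add_mul_self_eq_four {x y : ℤ} (h : x * x + y * y = 4) :
    x = 2 ∧ y = 0 ∨ x = 0 ∧ y = 2 ∨ x = -2 ∧ y = 0 ∨ x = 0 ∧ y = -2 := by
  have hx : x ∈ Set.Icc (-2) 2 := by constructor <;> nlinarith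
  have hy : y ∈ Set.Icc (-2) 2 := by constructor <;> nlinarith
  obtain ⟨hx₁, hx₂⟩ := hx
  obtain ⟨hy₁, hy₂⟩ := hy
  interval_cases x <;> interval_cases y <;> omega

lemma exists_eq_two_mul_of_normSq_eq_four {z : ℂ} (hz : z ∈ GaussianInt.toComplex.range)
    (h : normSq z = 4) : ∃ u : ℂ, (u = 1 ∨ u = I ∨ u = -1 ∨ u = -I) ∧ z = 2 * u := by
  obtain ⟨g, rfl⟩ := hz
  have hg : g.re * g.re + g.im * g.im = 4 := by
    have hnorm := GaussianInt.intCast_real_norm g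
    rw [h, Zsqrtd.norm_def] at hnorm
    have : ((g.re * g.re + g.im * g.im : ℤ) : ℝ) = 4 := by push_cast at hnorm ⊢; linarith
    exact_mod_cast this
  rw [GaussianInt.toComplex_def]
  rcases Int.eq_of_mul_self_add_mul_self_eq_four hg with
    ⟨hre, him⟩ | ⟨hre, him⟩ | ⟨hre, him⟩ | ⟨hre, him⟩
  · exact ⟨1, by simp, by simp [hre, him]⟩
  · exact ⟨I, by simp, by simp [hre, him]⟩
  · exact ⟨-1, by simp, by simp [hre, him]⟩
  · exact ⟨-I, by simp, by simp [hre, him]⟩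

section QuadraticRefinement

variable {A : Type*} [AddCommGroup A] {B : A → A → AddCircle (1 : ℝ)} {Q : A → AddCircle (1 : ℝ)}

lemma four_nsmul_eq_zero_of_add_self_eq_zero (hB : ∀ a b c, B a (b + c) = B a b + B a c)
    (hQ : ∀ v w, Q (v + w) - Q v - Q w + Q 0 = B v w) (hQ0 : Q 0 = 0) {a : A}
    (ha : a + a = 0) : 4 • Q a = 0 := by
  have hBa0 : B a 0 = 0 := by simpa using hB a 0 0
  have hBaa : B a a + B a a = 0 := by rw [← hB, ha, hBa0]
  have hQaa : B a a = -(Q a + Q a) := by rw [← hQ, ha, hQ0]; abel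
  calc 4 • Q a = -(-(Q a + Q a) + -(Q a + Q a)) := by abel
    _ = 0 := by rw [← hQaa, hBaa, neg_zero]

theorem normSq_gaussSumQ [Fintype A] (hB : ∀ a b c, B a (b + c) = B a b + B a c)
    (hnd : Function.Injective B) (hQ : ∀ v w, Q (v + w) - Q v - Q w + Q 0 = B v w) :
    normSq (gaussSumQ Q) = Fintype.card A := by
  classical
  let e (x : AddCircle (1 : ℝ)) : ℂ := AddCircle.toCircle x
  have hG : gaussSumQ Q = ∑ a, e (Q a) := gaussSumQ_eq_sum_toCircle Q
  let ψ (c : A) : AddChar A ℂ := (AddMonoidHom.mk' (B c) (hB c)).toCircleChar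
  have he_add (x y) : e (x + y) = e x * e y := by simp [e, AddCircle.toCircle_add]
  have he_conj (x) : conj (e x) = e (-x) := by
    simp only [e, AddCircle.toCircle_neg, Circle.coe_inv_eq_conj]
  have hB0 (b : A) : B 0 b = 0 := by rw [← hQ, zero_add]; abel
  have hψ (c : A) : ψ c = 0 ↔ c = 0 := by
    rw [AddMonoidHom.toCircleChar_eq_zero_iff, ← hnd.eq_iff, funext_iff, DFunLike.ext_iff]
    simp [hB0]
  have hshift (b c : A) : Q (c + b) - Q b = (Q c - Q 0) + B c b := by rw [← hQ]; abel
  suffices (normSq (gaussSumQ Q) : ℂ) = Fintype.card A by exact_mod_cast this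
  calc (normSq (gaussSumQ Q) : ℂ)
      = ∑ b, ∑ a, e (Q a - Q b) := by
        rw [← mul_conj, hG, map_sum, Finset.sum_mul_sum, Finset.sum_comm]
        simp only [he_conj, ← he_add, sub_eq_add_neg]
    _ = ∑ b, ∑ c, e (Q c - Q 0) * ψ c b := by
        refine Finset.sum_congr rfl fun b _ => ?_
        rw [← Equiv.sum_comp (Equiv.addRight b)]
        simp only [Equiv.coe_addRight, hshift, he_add]
        rfl
    _ = ∑ c, e (Q c - Q 0) * ∑ b, ψ c b := by
        rw [Finset.sum_comm]; simp only [Finset.mul_sum]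
    _ = Fintype.card A := by
        simp only [AddChar.sum_eq_ite, hψ, mul_ite, mul_zero, Finset.sum_ite_eq', Finset.mem_univ,
          if_true, sub_self]
        simp [e]

end QuadraticRefinement

section FiniteType

variable {A : Type*} [Fintype A] {Q : A → AddCircle (1 : ℝ)}

lemma gaussSumQ_mem_range_toComplex (hQ : ∀ a, 4 • Q a = 0) :
    gaussSumQ Q ∈ GaussianInt.toComplex.range := by
  rw [gaussSumQ_eq_sum_toCircle]
  refine Subring.sum_mem _ fun a _ => mem_range_toComplex_of_pow_four_eq_one ?_
  rw [← Circle.coe_pow, ← AddCircle.toCircle_nsmul, hQ a, AddCircle.toCircle_zero, Circle.coe_one]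

lemma arf_eq_of_gaussSumQ_eq_mul {r : ℝ} (hr : 0 < r) {u : ℂ} (h : gaussSumQ Q = r * u) :
    arf Q = (arg u / (2 * Real.pi) : ℝ) := by
  rw [arf, h, arg_real_mul u hr]

end FiniteType

/-- For every nondegenerate symmetric `ℝ/ℤ`-valued pairing `B` on `(ℤ/2) × (ℤ/2)` and
every quadratic refinement `Q` of `B` with `Q(0) = 0`, the Gauss sum is nonzero and the
Arf invariant of `Q` lies in `{0, 1/4, 1/2, 3/4} ⊂ ℝ/ℤ`.  (This constrains the anomaly of
the self-dual field on the manifold `X₁₁`, whose twisted cohomology `H⁶(X₁₁;L)` has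
torsion subgroup `ℤ/2 ⊕ ℤ/2`.) -/
theorem arf_multiple_of_quarter_X11 :
    ∀ B : ZMod 2 × ZMod 2 → ZMod 2 × ZMod 2 → AddCircle (1 : ℝ),
      (∀ a b c, B (a + b) c = B a c + B b c) →
      (∀ a b c, B a (b + c) = B a b + B a c) →
      (∀ a b, B a b = B b a) →
      Function.Injective B →
      ∀ Q : ZMod 2 × ZMod 2 → AddCircle (1 : ℝ),
        (∀ v w, Q (v + w) - Q v - Q w + Q 0 = B v w) →
        Q 0 = 0 →
        gaussSumQ Q ≠ 0 ∧
        arf Q ∈ ({((0 : ℝ) : AddCircle (1 : ℝ)), ((1/4 : ℝ) : AddCircle (1 : ℝ)),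
          ((1/2 : ℝ) : AddCircle (1 : ℝ)), ((3/4 : ℝ) : AddCircle (1 : ℝ))} :
            Set (AddCircle (1 : ℝ))) := by
  intro B _ hB _ hnd Q hQ hQ0
  have hnormSq : normSq (gaussSumQ Q) = 4 := by
    rw [normSq_gaussSumQ hB hnd hQ]; rfl
  refine ⟨fun h => by simp [h] at hnormSq, ?_⟩
  have hfour (a : ZMod 2 × ZMod 2) : 4 • Q a = 0 :=
    four_nsmul_eq_zero_of_add_self_eq_zero hB hQ hQ0 (by revert a; decide)
  obtain ⟨u, hu, hG⟩ :=
    exists_eq_two_mul_of_normSq_eq_four (gaussSumQ_mem_range_toComplex hfour) hnormSq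
  rw [arf_eq_of_gaussSumQ_eq_mul two_pos (by exact_mod_cast hG)]
  rcases hu with rfl | rfl | rfl | rfl
  · simp
  · rw [arg_I, show Real.pi / 2 / (2 * Real.pi) = 1 / 4 by field_simp; ring]
    simp
  · rw [arg_neg_one, show Real.pi / (2 * Real.pi) = 1 / 2 by field_simp]
    simp
  · rw [arg_neg_I, ← AddCircle.coe_add_period 1 (-(Real.pi / 2) / (2 * Real.pi)),
      show -(Real.pi / 2) / (2 * Real.pi) + 1 = 3 / 4 by field_simp; ring]
    simp
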